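/- arXiv:2401.17184 — 2 statements merged into one kernel-verified Lean document; each statement's English description precedes it below -/
import Mathlib

section
/- Let ε ≥ 0, Δ > 0, 0 < Δ_P ≤ Δ. Let i ≤ −1, c ≤ −1, 0 ≤ r̂ ≤ r < Δ with r − r̂ ≤ Δ_P. Let a, b, e, p, m, q be reals with |a − Φ⁻(i)| ≤ ε, |b − (Φ⁻)'(i)| ≤ ε, |e − E⁻(i, Δ)| ≤ ε, |p − Q⁻(c, r̂)| ≤ ε, |p| ≤ 1, |m − r·b| ≤ ε, |q − e·p| ≤ ε. Then the error-correction approximation a − m + q of Φ⁻(i − r) satisfies |Φ⁻(i − r) − (a − m + q)| ≤ (4 + Δ)·ε + (−E⁻(−1, Δ))·(Q_R + Q_I + ε), where Q_R = Q⁻_max(r*) − Q⁻_inf(r*) with Q⁻_max(r) = Q⁻(−1, r), Q⁻_inf(r) = (2^{−r} + r·ln 2 − 1)/(2^{−Δ} + Δ·ln 2 − 1), r* = log₂( (2X·ln X − X·ln(2X − 1)) / (2X·ln X − 2X·ln(2X − 1) + 2X − 2) ) with X = 2^Δ, and Q_I = 1 − Q⁻_inf(Δ − Δ_P). -/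
/-- Φ⁻(x) = log₂(1 − 2^x) -/
noncomputable def Phim (x : ℝ) : ℝ := Real.logb 2 (1 - (2:ℝ) ^ x)

/-- (Φ⁻)'(x) = −2^x / (1 − 2^x) -/
noncomputable def dPhim (x : ℝ) : ℝ := -(2:ℝ) ^ x / (1 - (2:ℝ) ^ x)

/-- First-order Taylor remainder E⁻(i, r) -/
noncomputable def Em (i r : ℝ) : ℝ := Phim (i - r) - Phim i + r * dPhim i

/-- Error ratio Q⁻(i, r) = E⁻(i, r)/E⁻(i, Δ) -/
noncomputable def Qm (Δ i r : ℝ) : ℝ := Em i r / Em i Δ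

/-- Q⁻_inf(r) = (2^{−r} + r·ln 2 − 1)/(2^{−Δ} + Δ·ln 2 − 1) -/
noncomputable def QmInf (Δ r : ℝ) : ℝ :=
  ((2:ℝ) ^ (-r) + r * Real.log 2 - 1) / ((2:ℝ) ^ (-Δ) + Δ * Real.log 2 - 1)

/-- Q⁻_max(r) = Q⁻(−1, r) -/
noncomputable def QmMax (Δ r : ℝ) : ℝ := Qm Δ (-1) r

/-- r* for the subtraction case, with X = 2^Δ -/
noncomputable def rStarM (Δ : ℝ) : ℝ :=
  Real.logb 2
    ((2 * (2:ℝ) ^ Δ * Real.log ((2:ℝ) ^ Δ) - (2:ℝ) ^ Δ * Real.log (2 * (2:ℝ) ^ Δ - 1)) /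
      (2 * (2:ℝ) ^ Δ * Real.log ((2:ℝ) ^ Δ) - 2 * (2:ℝ) ^ Δ * Real.log (2 * (2:ℝ) ^ Δ - 1)
        + 2 * (2:ℝ) ^ Δ - 2))

/-!
The error of `a - m + q` splits into five rounding terms, each at most `ε` (the product
`r * (b - Φ⁻'(i))` at most `Δ ε`), plus `E⁻(i, Δ) (Q⁻(i, r) - p)`. Since `E⁻(·, Δ)` is negative
and decreasing, `|E⁻(i, Δ)| ≤ -E⁻(-1, Δ)`. By the monotone form of l'Hôpital's rule, `Q⁻(i, r)`
increases with `i` and lies above its limit `Q⁻_inf(r)` as `i → -∞`, so for `i, c ≤ -1` both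
`Q⁻(i, r)` and `Q⁻(c, r̂)` lie in `[Q⁻_inf, Q⁻_max]`. The gap `Q⁻_max - Q⁻_inf` is largest at its
critical point `r*`, and convexity of the numerator of `Q⁻_inf` bounds
`Q⁻_inf(r) - Q⁻_inf(r̂)` by `Q_I`.
-/

open Real Set

section

variable {f f' : ℝ → ℝ} {D : Set ℝ}

theorem monotoneOn_of_hasDerivAt_nonneg (hD : Convex ℝ D)
    (hf : ∀ x ∈ D, HasDerivAt f (f' x) x) (hf' : ∀ x ∈ interior D, 0 ≤ f' x) :
    MonotoneOn f D :=
  monotoneOn_of_hasDerivWithinAt_nonneg hD (fun x hx => (hf x hx).continuousAt.continuousWithinAt)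
    (fun x hx => (hf x (interior_subset hx)).hasDerivWithinAt) hf'

theorem antitoneOn_of_hasDerivAt_nonpos (hD : Convex ℝ D)
    (hf : ∀ x ∈ D, HasDerivAt f (f' x) x) (hf' : ∀ x ∈ interior D, f' x ≤ 0) :
    AntitoneOn f D :=
  antitoneOn_of_hasDerivWithinAt_nonpos hD (fun x hx => (hf x hx).continuousAt.continuousWithinAt)
    (fun x hx => (hf x (interior_subset hx)).hasDerivWithinAt) hf'

theorem strictAntiOn_of_hasDerivAt_neg (hD : Convex ℝ D)
    (hf : ∀ x ∈ D, HasDerivAt f (f' x) x) (hf' : ∀ x ∈ interior D, f' x < 0) :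
    StrictAntiOn f D :=
  strictAntiOn_of_hasDerivWithinAt_neg hD (fun x hx => (hf x hx).continuousAt.continuousWithinAt)
    (fun x hx => (hf x (interior_subset hx)).hasDerivWithinAt) hf'

/-- Monotone l'Hôpital rule, cross-multiplied: `f / g` is monotone on `(a, b]`.
`ψ = f · g b - f b · g` vanishes at `a` and `b`, and `ψ' / g'` is monotone, so `ψ` first
decreases and then increases. -/
theorem mul_le_mul_of_monotoneOn_deriv_div {g g' : ℝ → ℝ} {a b r : ℝ}
    (hf : ∀ x ∈ Icc a b, HasDerivAt f (f' x) x) (hg : ∀ x ∈ Icc a b, HasDerivAt g (g' x) x)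
    (hfa : f a = 0) (hga : g a = 0) (hg' : ∀ x ∈ Ioo a b, 0 < g' x)
    (hmono : MonotoneOn (fun x => f' x / g' x) (Ioo a b)) (hr : r ∈ Icc a b) :
    f r * g b ≤ f b * g r := by
  have hab : a ≤ b := hr.1.trans hr.2
  have hgb : 0 ≤ g b := by
    rw [← hga]
    refine monotoneOn_of_hasDerivAt_nonneg (convex_Icc a b) hg ?_ ⟨le_rfl, hab⟩ ⟨hab, le_rfl⟩ hab
    simpa only [interior_Icc] using fun x hx => (hg' x hx).le
  set ψ := fun s => f s * g b - f b * g s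
  set h := fun x => f' x / g' x * g b - f b
  have hψ : ∀ x ∈ Icc a b, HasDerivAt ψ (f' x * g b - f b * g' x) x := fun x hx =>
    ((hf x hx).mul_const _).sub ((hg x hx).const_mul _)
  have hψ' : ∀ x ∈ Ioo a b, f' x * g b - f b * g' x = g' x * h x := fun x hx => by
    simp only [h]; field_simp [(hg' x hx).ne']
  have hh : MonotoneOn h (Ioo a b) := fun x hx y hy hxy =>
    sub_le_sub_right (mul_le_mul_of_nonneg_right (hmono hx hy hxy) hgb) _
  suffices ψ r ≤ 0 by simp only [ψ] at this; linarith
  rcases hr.1.eq_or_lt with rfl | har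
  · simp [ψ, hfa, hga]
  rcases hr.2.eq_or_lt with rfl | hrb
  · simp [ψ]
  rcases le_or_gt (h r) 0 with hhr | hhr
  · have : AntitoneOn ψ (Icc a r) := by
      refine antitoneOn_of_hasDerivAt_nonpos (convex_Icc a r)
        (fun x hx => hψ x ⟨hx.1, hx.2.trans hrb.le⟩) ?_
      simp only [interior_Icc]
      intro x hx
      have hx' : x ∈ Ioo a b := ⟨hx.1, hx.2.trans hrb⟩
      rw [hψ' x hx']
      exact mul_nonpos_of_nonneg_of_nonpos (hg' x hx').le
        ((hh hx' ⟨har, hrb⟩ hx.2.le).trans hhr)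
    simpa [ψ, hfa, hga] using this ⟨le_rfl, har.le⟩ ⟨har.le, le_rfl⟩ har.le
  · have : MonotoneOn ψ (Icc r b) := by
      refine monotoneOn_of_hasDerivAt_nonneg (convex_Icc r b)
        (fun x hx => hψ x ⟨har.le.trans hx.1, hx.2⟩) ?_
      simp only [interior_Icc]
      intro x hx
      have hx' : x ∈ Ioo a b := ⟨har.trans hx.1, hx.2⟩
      rw [hψ' x hx']
      exact mul_nonneg (hg' x hx').le (hhr.le.trans (hh ⟨har, hrb⟩ hx' hx.1.le))
    simpa [ψ] using this ⟨le_rfl, hrb.le⟩ ⟨hrb.le, le_rfl⟩ hrb.le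

end

lemma one_sub_two_rpow_pos {x : ℝ} (hx : x < 0) : 0 < 1 - (2:ℝ) ^ x := by
  linarith [rpow_lt_one_of_one_lt_of_neg one_lt_two hx]

lemma two_rpow_mul_two_rpow_neg_lt_one {i x : ℝ} (hi : i < 0) (hx : 0 ≤ x) :
    (2:ℝ) ^ i * (2:ℝ) ^ (-x) < 1 := by
  rw [← rpow_add two_pos]
  exact rpow_lt_one_of_one_lt_of_neg one_lt_two (by linarith)

lemma hasDerivAt_two_rpow (x : ℝ) : HasDerivAt (fun y => (2:ℝ) ^ y) ((2:ℝ) ^ x * log 2) x :=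
  (hasStrictDerivAt_const_rpow two_pos x).hasDerivAt

lemma hasDerivAt_Phim {x : ℝ} (hx : x < 0) : HasDerivAt Phim (dPhim x) x := by
  refine HasDerivAt.congr_deriv (f := fun y => log (1 - (2:ℝ) ^ y) / log 2)
    ((((hasDerivAt_two_rpow x).const_sub 1).log (one_sub_two_rpow_pos hx).ne').div_const _) ?_
  rw [dPhim]
  field_simp

lemma hasDerivAt_dPhim {x : ℝ} (hx : x < 0) :
    HasDerivAt dPhim (-(2:ℝ) ^ x * log 2 / (1 - (2:ℝ) ^ x) ^ 2) x := by
  refine HasDerivAt.congr_deriv (f := fun y => -(2:ℝ) ^ y / (1 - (2:ℝ) ^ y))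
    ((hasDerivAt_two_rpow x).neg.div ((hasDerivAt_two_rpow x).const_sub 1)
      (one_sub_two_rpow_pos hx).ne') ?_
  simp only [Pi.neg_apply]
  ring

lemma hasDerivAt_Em {i r : ℝ} (hir : i - r < 0) :
    HasDerivAt (Em i) (dPhim i - dPhim (i - r)) r := by
  refine HasDerivAt.congr_deriv (f := fun s => Phim (i - s) - Phim i + s * dPhim i)
    ((((hasDerivAt_Phim hir).comp r ((hasDerivAt_id r).const_sub i)).sub_const
      (Phim i)).add ((hasDerivAt_id r).mul_const (dPhim i))) ?_
  ring

lemma hasDerivAt_Em_left {i Δ : ℝ} (hi : i < 0) (hΔ : 0 ≤ Δ) :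
    HasDerivAt (fun j => Em j Δ)
      (dPhim (i - Δ) - dPhim i + Δ * (-(2:ℝ) ^ i * log 2 / (1 - (2:ℝ) ^ i) ^ 2)) i :=
  (((hasDerivAt_Phim (by linarith)).comp_sub_const i Δ).sub (hasDerivAt_Phim hi)).add
    ((hasDerivAt_dPhim hi).const_mul Δ)

lemma dPhim_sub_sub_dPhim {i x : ℝ} (hi : i < 0) (hix : i - x < 0) :
    dPhim (i - x) - dPhim i =
      (2:ℝ) ^ i * (1 - (2:ℝ) ^ (-x)) / ((1 - (2:ℝ) ^ i) * (1 - (2:ℝ) ^ i * (2:ℝ) ^ (-x))) := by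
  have h : (2:ℝ) ^ (i - x) = (2:ℝ) ^ i * (2:ℝ) ^ (-x) := by
    rw [sub_eq_add_neg, rpow_add two_pos]
  have h1 := (one_sub_two_rpow_pos hi).ne'
  have h2 := (one_sub_two_rpow_pos hix).ne'
  rw [h] at h2
  rw [dPhim, dPhim, h]
  field_simp
  ring

lemma dPhim_lt_dPhim_sub {i x : ℝ} (hi : i < 0) (hx : 0 < x) : dPhim i < dPhim (i - x) := by
  rw [← sub_pos, dPhim_sub_sub_dPhim hi (by linarith)]
  have := one_sub_two_rpow_pos hi
  have := one_sub_two_rpow_pos (neg_neg_of_pos hx)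
  have := two_rpow_mul_two_rpow_neg_lt_one hi hx.le
  have : 0 < (2:ℝ) ^ i := by positivity
  apply div_pos <;> nlinarith

lemma Em_zero (i : ℝ) : Em i 0 = 0 := by simp [Em]

lemma Em_neg {i r : ℝ} (hi : i < 0) (hr : 0 < r) : Em i r < 0 := by
  have h : StrictAntiOn (Em i) (Ici 0) := by
    refine strictAntiOn_of_hasDerivAt_neg (convex_Ici 0)
      (fun x hx => hasDerivAt_Em (by linarith [mem_Ici.1 hx])) fun x hx => ?_
    rw [interior_Ici] at hx
    linarith [dPhim_lt_dPhim_sub hi hx]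
  simpa [Em_zero] using h self_mem_Ici hr.le hr

lemma one_sub_two_rpow_neg_le (x : ℝ) : 1 - (2:ℝ) ^ (-x) ≤ x * log 2 := by
  have h := add_one_le_exp (log 2 * -x)
  rw [← rpow_def_of_pos two_pos] at h
  linarith

lemma antitoneOn_Em_left {Δ : ℝ} (hΔ : 0 ≤ Δ) : AntitoneOn (fun j => Em j Δ) (Iio 0) := by
  refine antitoneOn_of_hasDerivAt_nonpos (convex_Iio 0)
    (fun x hx => hasDerivAt_Em_left hx hΔ) fun x hx => ?_
  rw [interior_Iio, mem_Iio] at hx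
  have hu := one_sub_two_rpow_pos hx
  have hu0 : 0 < (2:ℝ) ^ x := by positivity
  have ht : (2:ℝ) ^ (-Δ) ≤ 1 := rpow_le_one_of_one_le_of_nonpos one_le_two (by linarith)
  have hut : 1 - (2:ℝ) ^ x ≤ 1 - (2:ℝ) ^ x * (2:ℝ) ^ (-Δ) := by nlinarith
  have : dPhim (x - Δ) - dPhim x ≤
      (2:ℝ) ^ x * (Δ * log 2) / ((1 - (2:ℝ) ^ x) * (1 - (2:ℝ) ^ x)) := by
    rw [dPhim_sub_sub_dPhim hx (by linarith)]
    gcongr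
    exact one_sub_two_rpow_neg_le Δ
  have e : (2:ℝ) ^ x * (Δ * log 2) / ((1 - (2:ℝ) ^ x) * (1 - (2:ℝ) ^ x)) =
      -(Δ * (-(2:ℝ) ^ x * log 2 / (1 - (2:ℝ) ^ x) ^ 2)) := by ring
  linarith

/-- `-E⁻(i, r) ~ 2 ^ i * qInfNum r / log 2` as `i → -∞`, so `Q⁻_inf` is the limit of `Q⁻(i, ·)`. -/
noncomputable def qInfNum (r : ℝ) : ℝ := (2:ℝ) ^ (-r) + r * log 2 - 1

lemma QmInf_eq (Δ r : ℝ) : QmInf Δ r = qInfNum r / qInfNum Δ := rfl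

lemma qInfNum_zero : qInfNum 0 = 0 := by simp [qInfNum]

lemma qInfNum_pos {r : ℝ} (hr : r ≠ 0) : 0 < qInfNum r := by
  have h := add_one_lt_exp (mul_ne_zero (log_pos one_lt_two).ne' (neg_ne_zero.2 hr))
  rw [← rpow_def_of_pos two_pos] at h
  rw [qInfNum]
  linarith

lemma hasDerivAt_qInfNum (r : ℝ) : HasDerivAt qInfNum (log 2 * (1 - (2:ℝ) ^ (-r))) r := by
  refine HasDerivAt.congr_deriv (f := fun s => (2:ℝ) ^ (-s) + s * log 2 - 1)
    ((((hasDerivAt_two_rpow (-r)).comp r (hasDerivAt_neg r)).add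
      ((hasDerivAt_id r).mul_const _)).sub_const 1) ?_
  ring

lemma monotone_qInfNum_add_sub {d : ℝ} (hd : 0 ≤ d) :
    Monotone fun x => qInfNum (x + d) - qInfNum x := by
  refine monotone_of_hasDerivAt_nonneg
    (fun x => ((hasDerivAt_qInfNum (x + d)).comp_add_const x d).sub (hasDerivAt_qInfNum x))
    fun x => ?_
  have : (2:ℝ) ^ (-(x + d)) ≤ (2:ℝ) ^ (-x) :=
    rpow_le_rpow_of_exponent_le one_le_two (by linarith)
  have := log_pos one_lt_two
  simp only [Pi.zero_apply]
  nlinarith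

lemma qInfNum_monotoneOn : MonotoneOn qInfNum (Ici 0) := by
  refine monotoneOn_of_hasDerivAt_nonneg (convex_Ici 0) (fun x _ => hasDerivAt_qInfNum x)
    fun x hx => ?_
  rw [interior_Ici, mem_Ioi] at hx
  have := rpow_le_one_of_one_le_of_nonpos one_le_two (neg_nonpos.2 hx.le)
  exact mul_nonneg (log_pos one_lt_two).le (by linarith)

lemma QmInf_monotoneOn {Δ : ℝ} (hΔ : 0 < Δ) : MonotoneOn (QmInf Δ) (Ici 0) := fun _ hx _ hy hxy =>
  div_le_div_of_nonneg_right (qInfNum_monotoneOn hx hy hxy) (qInfNum_pos hΔ.ne').le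

lemma QmInf_sub_QmInf_le {Δ ΔP r rhat : ℝ} (hΔ : 0 < Δ) (hΔPΔ : ΔP ≤ Δ) (hrhat0 : 0 ≤ rhat)
    (hrhatr : rhat ≤ r) (hrΔ : r ≤ Δ) (hround : r - rhat ≤ ΔP) :
    QmInf Δ r - QmInf Δ rhat ≤ 1 - QmInf Δ (Δ - ΔP) := by
  have hF := qInfNum_pos hΔ.ne'
  have hconv := monotone_qInfNum_add_sub (sub_nonneg.2 hrhatr) (by linarith : rhat ≤ Δ - (r - rhat))
  have hmono := qInfNum_monotoneOn (sub_nonneg.2 hΔPΔ) (by simp only [mem_Ici]; linarith)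
    (by linarith : Δ - ΔP ≤ Δ - (r - rhat))
  simp only [sub_add_cancel, add_sub_cancel] at hconv
  rw [QmInf_eq, QmInf_eq, QmInf_eq, ← sub_div, div_le_iff₀ hF, sub_mul, div_mul_cancel₀ _ hF.ne']
  linarith

section

variable {Δ i r : ℝ}

lemma hasDerivAt_neg_Em (hir : i - r < 0) :
    HasDerivAt (fun s => -Em i s) (dPhim (i - r) - dPhim i) r :=
  (hasDerivAt_Em hir).neg.congr_deriv (neg_sub _ _)

lemma deriv_qInfNum_div_deriv_neg_Em (hi : i < 0) {x : ℝ} (hx : 0 < x) :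
    log 2 * (1 - (2:ℝ) ^ (-x)) / (dPhim (i - x) - dPhim i) =
      log 2 * (1 - (2:ℝ) ^ i) / (2:ℝ) ^ i * (1 - (2:ℝ) ^ i * (2:ℝ) ^ (-x)) := by
  have := one_sub_two_rpow_pos (neg_neg_of_pos hx)
  have := one_sub_two_rpow_pos hi
  have := two_rpow_mul_two_rpow_neg_lt_one hi hx.le
  rw [dPhim_sub_sub_dPhim hi (by linarith)]
  field_simp

theorem QmInf_le_Qm (hi : i < 0) (hΔ : 0 < Δ) (hr : r ∈ Icc 0 Δ) : QmInf Δ r ≤ Qm Δ i r := by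
  have key := mul_le_mul_of_monotoneOn_deriv_div (f := qInfNum) (g := fun s => -Em i s)
    (fun x _ => hasDerivAt_qInfNum x) (fun x hx => hasDerivAt_neg_Em (by linarith [hx.1]))
    qInfNum_zero (by simp [Em_zero]) (fun x hx => sub_pos.2 (dPhim_lt_dPhim_sub hi hx.1))
    (fun x hx y hy hxy => by
      simp only [deriv_qInfNum_div_deriv_neg_Em hi hx.1, deriv_qInfNum_div_deriv_neg_Em hi hy.1]
      have := one_sub_two_rpow_pos hi
      gcongr
      exact one_le_two) hr
  rw [QmInf_eq, Qm, ← neg_div_neg_eq (Em i r),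
    div_le_div_iff₀ (qInfNum_pos hΔ.ne') (neg_pos.2 (Em_neg hi hΔ))]
  linarith

lemma deriv_neg_Em_div_deriv_neg_Em {j : ℝ} (hi : i < 0) (hj : j < 0) {x : ℝ} (hx : 0 < x) :
    (dPhim (i - x) - dPhim i) / (dPhim (j - x) - dPhim j) =
      (2:ℝ) ^ i * (1 - (2:ℝ) ^ j) / ((2:ℝ) ^ j * (1 - (2:ℝ) ^ i)) *
        ((1 - (2:ℝ) ^ j * (2:ℝ) ^ (-x)) / (1 - (2:ℝ) ^ i * (2:ℝ) ^ (-x))) := by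
  have := one_sub_two_rpow_pos (neg_neg_of_pos hx)
  have := one_sub_two_rpow_pos hi
  have := one_sub_two_rpow_pos hj
  have := two_rpow_mul_two_rpow_neg_lt_one hi hx.le
  have := two_rpow_mul_two_rpow_neg_lt_one hj hx.le
  rw [dPhim_sub_sub_dPhim hi (by linarith), dPhim_sub_sub_dPhim hj (by linarith)]
  field_simp

theorem Qm_le_Qm {j : ℝ} (hij : i ≤ j) (hj : j < 0) (hΔ : 0 < Δ) (hr : r ∈ Icc 0 Δ) :
    Qm Δ i r ≤ Qm Δ j r := by
  have hi : i < 0 := hij.trans_lt hj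
  have key := mul_le_mul_of_monotoneOn_deriv_div (f := fun s => -Em i s)
    (g := fun s => -Em j s) (fun x hx => hasDerivAt_neg_Em (by linarith [hx.1]))
    (fun x hx => hasDerivAt_neg_Em (by linarith [hx.1])) (by simp [Em_zero]) (by simp [Em_zero])
    (fun x hx => sub_pos.2 (dPhim_lt_dPhim_sub hj hx.1))
    (fun x hx y hy hxy => by
      simp only [deriv_neg_Em_div_deriv_neg_Em hi hj hx.1, deriv_neg_Em_div_deriv_neg_Em hi hj hy.1]
      have := one_sub_two_rpow_pos hi
      have := one_sub_two_rpow_pos hj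
      have hu : (2:ℝ) ^ i ≤ (2:ℝ) ^ j := rpow_le_rpow_of_exponent_le one_le_two hij
      have ht : (2:ℝ) ^ (-y) ≤ (2:ℝ) ^ (-x) := rpow_le_rpow_of_exponent_le one_le_two (by linarith)
      have := two_rpow_mul_two_rpow_neg_lt_one hi hx.1.le
      have := two_rpow_mul_two_rpow_neg_lt_one hi hy.1.le
      refine mul_le_mul_of_nonneg_left ?_ (by positivity)
      rw [div_le_div_iff₀ (by linarith) (by linarith)]
      nlinarith [mul_nonneg (sub_nonneg.2 hu) (sub_nonneg.2 ht)]) hr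
  rw [Qm, Qm, ← neg_div_neg_eq (Em i r), ← neg_div_neg_eq (Em j r),
    div_le_div_iff₀ (neg_pos.2 (Em_neg hi hΔ)) (neg_pos.2 (Em_neg hj hΔ))]
  linarith

end

lemma log_two_mul_sub_one_lt {X : ℝ} (hX : 1 < X) : log (2 * X - 1) < 2 * log X := by
  rw [← log_rpow (by linarith), rpow_two]
  exact log_lt_log (by linarith) (by nlinarith)

lemma log_two_mul_sub_one_sub_log_lt {X : ℝ} (hX : 1 < X) :
    log (2 * X - 1) - log X < 1 - X⁻¹ := by
  rw [← log_div (by linarith) (by linarith)]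
  have h : (2 * X - 1) / X = 2 - X⁻¹ := by field_simp
  have h1 : X⁻¹ < 1 := inv_lt_one_of_one_lt₀ hX
  rw [h]
  linarith [log_lt_sub_one_of_pos (by linarith : 0 < 2 - X⁻¹) (by linarith)]

lemma two_sub_four_mul_inv_le_log {y : ℝ} (hy : 1 ≤ y) : 2 - 4 * (y + 1)⁻¹ ≤ log y := by
  have hd : ∀ x ∈ Ici (1:ℝ), HasDerivAt (fun y => log y + 4 * (y + 1)⁻¹)
      ((x - 1) ^ 2 / (x * (x + 1) ^ 2)) x := fun x (hx : 1 ≤ x) => by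
    refine ((hasDerivAt_log (by linarith)).add
      ((((hasDerivAt_id x).add_const 1).inv (by simp; linarith)).const_mul 4)).congr_deriv ?_
    simp only [id]
    field_simp
    ring
  have := monotoneOn_of_hasDerivAt_nonneg (convex_Ici 1) hd
    (fun x (hx : x ∈ interior (Ici 1)) => by
      rw [interior_Ici, mem_Ioi] at hx
      exact div_nonneg (sq_nonneg _) (mul_pos (by linarith) (by positivity)).le)
    self_mem_Ici hy hy
  norm_num at this
  linarith

section

variable {Δ : ℝ}

lemma Phim_neg_one : Phim (-1) = -1 := by
  rw [Phim, rpow_neg_one, show (1:ℝ) - 2⁻¹ = 2⁻¹ by norm_num, logb_inv,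
    logb_self_eq_one one_lt_two]

lemma dPhim_neg_one : dPhim (-1) = -1 := by
  norm_num [dPhim, rpow_neg_one]

lemma Em_neg_one (hΔ : 0 ≤ Δ) :
    Em (-1) Δ = (log (2 * (2:ℝ) ^ Δ - 1) - 2 * log ((2:ℝ) ^ Δ)) / log 2 := by
  have hX : 1 ≤ (2:ℝ) ^ Δ := one_le_rpow one_le_two hΔ
  have h : 1 - (2:ℝ) ^ (-1 - Δ) = (2 * (2:ℝ) ^ Δ - 1) / (2 * (2:ℝ) ^ Δ) := by
    rw [show -1 - Δ = -1 + -Δ by ring, rpow_add two_pos, rpow_neg_one, rpow_neg zero_le_two]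
    field_simp
  rw [Em, Phim_neg_one, dPhim_neg_one, Phim, h, logb, log_div (by linarith) (by positivity),
    log_mul two_ne_zero (by positivity), log_rpow two_pos]
  field_simp
  ring

noncomputable def rStarNum (Δ : ℝ) : ℝ :=
  2 * (2:ℝ) ^ Δ * log ((2:ℝ) ^ Δ) - (2:ℝ) ^ Δ * log (2 * (2:ℝ) ^ Δ - 1)

noncomputable def rStarDen (Δ : ℝ) : ℝ :=
  2 * (2:ℝ) ^ Δ * log ((2:ℝ) ^ Δ) - 2 * (2:ℝ) ^ Δ * log (2 * (2:ℝ) ^ Δ - 1)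
    + 2 * (2:ℝ) ^ Δ - 2

lemma rStarM_eq (Δ : ℝ) : rStarM Δ = logb 2 (rStarNum Δ / rStarDen Δ) := rfl

lemma rStarNum_pos (hΔ : 0 < Δ) : 0 < rStarNum Δ := by
  have hX : 1 < (2:ℝ) ^ Δ := one_lt_rpow one_lt_two hΔ
  have := log_two_mul_sub_one_lt hX
  rw [rStarNum]
  nlinarith

lemma rStarDen_pos (hΔ : 0 < Δ) : 0 < rStarDen Δ := by
  have hX : 1 < (2:ℝ) ^ Δ := one_lt_rpow one_lt_two hΔ
  have h := log_two_mul_sub_one_sub_log_lt hX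
  have e : (2:ℝ) ^ Δ * ((2:ℝ) ^ Δ)⁻¹ = 1 := mul_inv_cancel₀ (by positivity)
  rw [rStarDen]
  nlinarith

lemma rStarDen_le_rStarNum (hΔ : 0 < Δ) : rStarDen Δ ≤ rStarNum Δ := by
  have hX : 1 < (2:ℝ) ^ Δ := one_lt_rpow one_lt_two hΔ
  have h := two_sub_four_mul_inv_le_log (by linarith : 1 ≤ 2 * (2:ℝ) ^ Δ - 1)
  have e : (2:ℝ) ^ Δ * (2 * (2:ℝ) ^ Δ - 1 + 1)⁻¹ = 1 / 2 := by field_simp; ring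
  rw [rStarDen, rStarNum]
  nlinarith

lemma rStarM_nonneg (hΔ : 0 < Δ) : 0 ≤ rStarM Δ :=
  logb_nonneg one_lt_two ((one_le_div (rStarDen_pos hΔ)).2 (rStarDen_le_rStarNum hΔ))

lemma two_rpow_neg_rStarM (hΔ : 0 < Δ) : (2:ℝ) ^ (-rStarM Δ) = rStarDen Δ / rStarNum Δ := by
  rw [rStarM_eq, rpow_neg zero_le_two,
    rpow_logb two_pos (by norm_num) (div_pos (rStarNum_pos hΔ) (rStarDen_pos hΔ)), inv_div]

/-- The identity that makes `r*` the critical point of `Q⁻_max - Q⁻_inf`. -/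
lemma qInfNum_eq_rStarM (hΔ : 0 < Δ) :
    qInfNum Δ = (1 - (2:ℝ) ^ (-rStarM Δ) / 2) * log 2 * -Em (-1) Δ := by
  have h := log_two_mul_sub_one_lt (one_lt_rpow one_lt_two hΔ)
  rw [log_rpow two_pos] at h
  have hX : 0 < (2:ℝ) ^ Δ := by positivity
  have hN : rStarNum Δ = (2:ℝ) ^ Δ * (2 * (Δ * log 2) - log (2 * (2:ℝ) ^ Δ - 1)) := by
    rw [rStarNum, log_rpow two_pos]; ring
  rw [two_rpow_neg_rStarM hΔ, Em_neg_one hΔ.le, qInfNum, rpow_neg zero_le_two, hN, rStarDen,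
    log_rpow two_pos]
  generalize (2:ℝ) ^ Δ = X at *
  generalize log (2 * X - 1) = M at *
  generalize Δ * log 2 = L at *
  have : L * 2 - M ≠ 0 := by linarith
  field_simp
  ring

lemma hasDerivAt_QmMax_sub_QmInf (hΔ : 0 < Δ) {x : ℝ} (hx : 0 ≤ x) :
    HasDerivAt (fun s => QmMax Δ s - QmInf Δ s)
      ((1 - (2:ℝ) ^ (-x)) / -Em (-1) Δ *
        ((1 - (2:ℝ) ^ (-x) / 2)⁻¹ - (1 - (2:ℝ) ^ (-rStarM Δ) / 2)⁻¹)) x := by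
  have hE := Em_neg (i := -1) (by norm_num) hΔ
  have ht : (2:ℝ) ^ (-x) ≤ 1 := rpow_le_one_of_one_le_of_nonpos one_le_two (by linarith)
  have ht' : (2:ℝ) ^ (-rStarM Δ) ≤ 1 :=
    rpow_le_one_of_one_le_of_nonpos one_le_two (by linarith [rStarM_nonneg hΔ])
  refine HasDerivAt.congr_deriv (f := fun s => Em (-1) s / Em (-1) Δ - qInfNum s / qInfNum Δ)
    (((hasDerivAt_Em (by linarith)).div_const _).sub ((hasDerivAt_qInfNum x).div_const _)) ?_
  rw [← neg_sub (dPhim (-1 - x)), dPhim_sub_sub_dPhim (by norm_num) (by linarith), rpow_neg_one,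
    qInfNum_eq_rStarM hΔ]
  have : 1 - (2:ℝ) ^ (-x) / 2 ≠ 0 := by linarith
  have : 1 - (2:ℝ) ^ (-rStarM Δ) / 2 ≠ 0 := by linarith
  field_simp
  ring

theorem QmMax_sub_QmInf_le (hΔ : 0 < Δ) {s : ℝ} (hs : 0 ≤ s) :
    QmMax Δ s - QmInf Δ s ≤ QmMax Δ (rStarM Δ) - QmInf Δ (rStarM Δ) := by
  have hE : 0 < -Em (-1) Δ := neg_pos.2 (Em_neg (by norm_num) hΔ)
  have hR := rStarM_nonneg hΔ
  have hsign : ∀ x : ℝ, 0 ≤ x → 0 ≤ (1 - (2:ℝ) ^ (-x)) / -Em (-1) Δ :=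
    fun x hx => div_nonneg (sub_nonneg.2 (rpow_le_one_of_one_le_of_nonpos one_le_two
      (by linarith))) hE.le
  have hpos : ∀ x : ℝ, 0 ≤ x → 0 < 1 - (2:ℝ) ^ (-x) / 2 := fun x hx => by
    linarith [rpow_le_one_of_one_le_of_nonpos one_le_two (neg_nonpos.2 hx)]
  rcases le_total s (rStarM Δ) with h | h
  · refine monotoneOn_of_hasDerivAt_nonneg (convex_Icc 0 (rStarM Δ))
      (fun x hx => hasDerivAt_QmMax_sub_QmInf hΔ hx.1) (fun x hx => ?_) ⟨hs, h⟩ ⟨hR, le_rfl⟩ h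
    rw [interior_Icc] at hx
    refine mul_nonneg (hsign x hx.1.le) (sub_nonneg.2 (inv_anti₀ (hpos x hx.1.le) ?_))
    have := rpow_le_rpow_of_exponent_le one_le_two (neg_le_neg hx.2.le)
    linarith
  · refine antitoneOn_of_hasDerivAt_nonpos (convex_Ici (rStarM Δ))
      (fun x hx => hasDerivAt_QmMax_sub_QmInf hΔ (hR.trans hx)) (fun x hx => ?_)
      self_mem_Ici h h
    rw [interior_Ici, mem_Ioi] at hx
    refine mul_nonpos_of_nonneg_of_nonpos (hsign x (hR.trans hx.le))
      (sub_nonpos.2 (inv_anti₀ (hpos _ hR) ?_))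
    have := rpow_le_rpow_of_exponent_le one_le_two (neg_le_neg hx.le)
    linarith

end

theorem abs_Qm_sub_Qm_le {Δ ΔP i c r rhat : ℝ} (hΔ : 0 < Δ) (hΔPΔ : ΔP ≤ Δ) (hi : i ≤ -1)
    (hc : c ≤ -1) (hrhat0 : 0 ≤ rhat) (hrhatr : rhat ≤ r) (hrΔ : r ≤ Δ) (hround : r - rhat ≤ ΔP) :
    |Qm Δ i r - Qm Δ c rhat| ≤
      (QmMax Δ (rStarM Δ) - QmInf Δ (rStarM Δ)) + (1 - QmInf Δ (Δ - ΔP)) := by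
  have hr0 : 0 ≤ r := hrhat0.trans hrhatr
  have hr : r ∈ Icc 0 Δ := ⟨hr0, hrΔ⟩
  have hrhat : rhat ∈ Icc 0 Δ := ⟨hrhat0, hrhatr.trans hrΔ⟩
  have hir_le : Qm Δ i r ≤ QmMax Δ r := Qm_le_Qm hi (by norm_num) hΔ hr
  have hir_ge : QmInf Δ r ≤ Qm Δ i r := QmInf_le_Qm (by linarith) hΔ hr
  have hc_le : Qm Δ c rhat ≤ QmMax Δ rhat := Qm_le_Qm hc (by norm_num) hΔ hrhat
  have hc_ge : QmInf Δ rhat ≤ Qm Δ c rhat := QmInf_le_Qm (by linarith) hΔ hrhat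
  have hDr := QmMax_sub_QmInf_le hΔ hr0
  have hDrhat := QmMax_sub_QmInf_le hΔ hrhat0
  have hmono := QmInf_monotoneOn hΔ hrhat0 hr0 hrhatr
  have hinc := QmInf_sub_QmInf_le hΔ hΔPΔ hrhat0 hrhatr hrΔ hround
  rw [abs_sub_le_iff]
  constructor <;> linarith

lemma Phim_sub_eq_error_terms {Δ i r a b e p m q : ℝ} (hE : Em i Δ ≠ 0) :
    Phim (i - r) - (a - m + q) = (Phim i - a) + (m - r * b) + r * (b - dPhim i)
      + (e * p - q) + p * (Em i Δ - e) + Em i Δ * (Qm Δ i r - p) := by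
  rw [Qm, mul_sub (Em i Δ), mul_div_cancel₀ _ hE]
  unfold Em
  ring

theorem stmt_15_general (ε Δ ΔP : ℝ) (hΔ : 0 < Δ) (hΔPΔ : ΔP ≤ Δ)
    (i c r rhat : ℝ) (hi : i ≤ -1) (hc : c ≤ -1)
    (hrhat0 : 0 ≤ rhat) (hrhatr : rhat ≤ r) (hrΔ : r < Δ) (hround : r - rhat ≤ ΔP)
    (a b e p m q : ℝ)
    (ha : |a - Phim i| ≤ ε)
    (hb : |b - dPhim i| ≤ ε)
    (he : |e - Em i Δ| ≤ ε)
    (hp : |p - Qm Δ c rhat| ≤ ε)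
    (hp1 : |p| ≤ 1)
    (hm : |m - r * b| ≤ ε)
    (hq : |q - e * p| ≤ ε) :
    |Phim (i - r) - (a - m + q)| ≤
      (4 + Δ) * ε +
        (-Em (-1) Δ) * ((QmMax Δ (rStarM Δ) - QmInf Δ (rStarM Δ))
          + (1 - QmInf Δ (Δ - ΔP)) + ε) := by
  have hEi : Em i Δ < 0 := Em_neg (by linarith) hΔ
  have hE : |Em i Δ| ≤ -Em (-1) Δ := by
    rw [abs_of_neg hEi]
    linarith [antitoneOn_Em_left hΔ.le (by linarith : i < 0) (by norm_num : (-1:ℝ) < 0) hi]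
  have hQ : |Qm Δ i r - p| ≤ (QmMax Δ (rStarM Δ) - QmInf Δ (rStarM Δ))
      + (1 - QmInf Δ (Δ - ΔP)) + ε :=
    (abs_sub_le _ (Qm Δ c rhat) _).trans <| add_le_add
      (abs_Qm_sub_Qm_le hΔ hΔPΔ hi hc hrhat0 hrhatr hrΔ.le hround) (abs_sub_comm p _ ▸ hp)
  have hr : |r * (b - dPhim i)| ≤ Δ * ε := by
    rw [abs_mul, abs_of_nonneg (hrhat0.trans hrhatr)]
    exact mul_le_mul hrΔ.le hb (abs_nonneg _) hΔ.le
  have hpe : |p * (Em i Δ - e)| ≤ ε := by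
    rw [abs_mul, abs_sub_comm, ← one_mul ε]
    exact mul_le_mul hp1 he (abs_nonneg _) zero_le_one
  have hEQ := abs_mul (Em i Δ) (Qm Δ i r - p) ▸
    mul_le_mul hE hQ (abs_nonneg _) (hE.trans' (abs_nonneg _))
  rw [abs_sub_comm] at ha hq
  calc |Phim (i - r) - (a - m + q)|
      ≤ |Phim i - a| + |m - r * b| + |r * (b - dPhim i)| + |e * p - q| + |p * (Em i Δ - e)|
        + |Em i Δ * (Qm Δ i r - p)| := by
        rw [Phim_sub_eq_error_terms hEi.ne]
        grw [abs_add_le, abs_add_le, abs_add_le, abs_add_le, abs_add_le]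
    _ ≤ _ := by linarith

theorem stmt_15 (ε Δ ΔP : ℝ) (hε : 0 ≤ ε) (hΔ : 0 < Δ) (hΔP : 0 < ΔP) (hΔPΔ : ΔP ≤ Δ)
    (i c r rhat : ℝ) (hi : i ≤ -1) (hc : c ≤ -1)
    (hrhat0 : 0 ≤ rhat) (hrhatr : rhat ≤ r) (hrΔ : r < Δ) (hround : r - rhat ≤ ΔP)
    (a b e p m q : ℝ)
    (ha : |a - Phim i| ≤ ε)
    (hb : |b - dPhim i| ≤ ε)
    (he : |e - Em i Δ| ≤ ε)
    (hp : |p - Qm Δ c rhat| ≤ ε)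
    (hp1 : |p| ≤ 1)
    (hm : |m - r * b| ≤ ε)
    (hq : |q - e * p| ≤ ε) :
    |Phim (i - r) - (a - m + q)| ≤
      (4 + Δ) * ε +
        (-Em (-1) Δ) * ((QmMax Δ (rStarM Δ) - QmInf Δ (rStarM Δ))
          + (1 - QmInf Δ (Δ - ΔP)) + ε) :=
  stmt_15_general ε Δ ΔP hΔ hΔPΔ i c r rhat hi hc hrhat0 hrhatr hrΔ hround a b e p m q ha hb he hp
    hp1 hm hq
end

section
/- Let x and r_b be real numbers with r_b < x < 0. Set r_a = r_b − x and k = x + Φ⁻(r_a) − Φ⁻(r_b). Then k < 0 and the co-transformation identity Φ⁻(x) = Φ⁻(r_b) + Φ⁻(k) holds. -/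
lemma two_rpow_lt_one_iff {y : ℝ} : (2:ℝ) ^ y < 1 ↔ y < 0 :=
  ⟨fun h ↦ not_le.1 fun h0 ↦ (Real.one_le_rpow one_le_two h0).not_gt h,
    Real.rpow_lt_one_of_one_lt_of_neg one_lt_two⟩

lemma one_sub_two_rpow_pos_s17 {y : ℝ} (hy : y < 0) : 0 < 1 - (2:ℝ) ^ y :=
  sub_pos.2 (two_rpow_lt_one_iff.2 hy)

lemma two_rpow_Phim {y : ℝ} (hy : y < 0) : (2:ℝ) ^ Phim y = 1 - 2 ^ y :=
  Real.rpow_logb two_pos (by norm_num) (one_sub_two_rpow_pos_s17 hy)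

lemma one_sub_two_rpow_cotransform {x rb : ℝ} (hrb : rb < x) (hx : x < 0) :
    1 - (2:ℝ) ^ (x + Phim (rb - x) - Phim rb) = (1 - 2 ^ x) / (1 - 2 ^ rb) := by
  have hrb0 : rb < 0 := hrb.trans hx
  have hden : (1:ℝ) - 2 ^ rb ≠ 0 := (one_sub_two_rpow_pos_s17 hrb0).ne'
  have hx0 : (2:ℝ) ^ x ≠ 0 := (Real.rpow_pos_of_pos two_pos x).ne'
  rw [Real.rpow_sub two_pos, Real.rpow_add two_pos, two_rpow_Phim (sub_neg.2 hrb),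
    two_rpow_Phim hrb0, Real.rpow_sub two_pos]
  field_simp
  ring

theorem stmt_17 (x rb : ℝ) (hrb : rb < x) (hx : x < 0) :
    x + Phim (rb - x) - Phim rb < 0 ∧
    Phim x = Phim rb + Phim (x + Phim (rb - x) - Phim rb) := by
  set k := x + Phim (rb - x) - Phim rb
  have hnum := one_sub_two_rpow_pos_s17 hx
  have hden := one_sub_two_rpow_pos_s17 (hrb.trans hx)
  have hk : 1 - (2:ℝ) ^ k = (1 - 2 ^ x) / (1 - 2 ^ rb) := one_sub_two_rpow_cotransform hrb hx
  refine ⟨two_rpow_lt_one_iff.1 (sub_pos.1 (hk ▸ div_pos hnum hden)), ?_⟩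
  rw [Phim.eq_1 k, hk, Real.logb_div hnum.ne' hden.ne', ← Phim, ← Phim]
  ring
end
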